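/- Let f = f⁰ + τg in L²((0,1)²), where the integral operator of f⁰ has finite rank r₀, g(x,y) = ∑_{r∈R} ψ_r(x)ψ_r(y) for a finite orthonormal family of cardinality M, and τ > 0. Then for every d ∈ ℕ and every kernel h whose integral operator has rank at most d, ‖f − h‖²_{L²((0,1)²)} ≥ τ²·max(M − r₀ − d, 0). -/

import Mathlib

open MeasureTheory

section Helpers

variable {α β : Type*} [MeasurableSpace α] [MeasurableSpace β]

lemma l2mul_integrable {μ : Measure α} {f g : α → ℝ}
    (hf : MemLp f 2 μ) (hg : MemLp g 2 μ) :
    Integrable (fun x => f x * g x) μ := by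
  have hmeas := hf.aestronglyMeasurable.mul hg.aestronglyMeasurable
  refine Integrable.mono' ((hf.integrable_sq.add hg.integrable_sq).div_const 2) hmeas ?_
  filter_upwards with x
  have h1 := sq_nonneg (|f x| - |g x|)
  have h2 : |f x| ^ 2 = f x ^ 2 := sq_abs _
  have h3 : |g x| ^ 2 = g x ^ 2 := sq_abs _
  rw [Real.norm_eq_abs, abs_mul]
  simp only [Pi.add_apply]
  nlinarith [abs_nonneg (f x), abs_nonneg (g x)]

lemma l2prod_memℒp {μ : Measure α} {ν : Measure β} [SigmaFinite μ] [SigmaFinite ν]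
    {f : α → ℝ} {g : β → ℝ} (hfm : Measurable f) (hgm : Measurable g)
    (hf : MemLp f 2 μ) (hg : MemLp g 2 ν) :
    MemLp (fun p : α × β => f p.1 * g p.2) 2 (μ.prod ν) := by
  have hmeas : AEStronglyMeasurable (fun p : α × β => f p.1 * g p.2) (μ.prod ν) :=
    ((hfm.comp measurable_fst).mul (hgm.comp measurable_snd)).aestronglyMeasurable
  rw [memLp_two_iff_integrable_sq hmeas]
  have := (hf.integrable_sq).mul_prod (hg.integrable_sq)
  simpa [mul_pow] using this

end Helpers

open Finset Module in
lemma matrix_lower_bound {M K : ℕ} (τ : ℝ) (a b : Fin K → Fin M → ℝ) :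
    τ ^ 2 * ((M : ℝ) - K) ≤
      ∑ r : Fin M, ∑ s : Fin M, ((if r = s then τ else 0) + ∑ i, a i r * b i s) ^ 2 := by
  classical
  set bv : Fin K → EuclideanSpace ℝ (Fin M) := fun i => WithLp.toLp 2 (b i : Fin M → ℝ) with hbv
  set V := (Submodule.span ℝ (Set.range bv))ᗮ with hV
  set A : Fin M → Fin M → ℝ := fun r s => (if r = s then τ else 0) + ∑ i, a i r * b i s with hA
  set rowv : Fin M → EuclideanSpace ℝ (Fin M) := fun r => WithLp.toLp 2 (id (A r) : Fin M → ℝ) with hrowv0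
  have hrs : ∀ r s, rowv r s = A r s := fun r s => rfl
  -- dimension bound
  have hspan : finrank ℝ (Submodule.span ℝ (Set.range bv)) ≤ K := by
    simpa [Set.finrank] using finrank_range_le_card bv
  have hsum : finrank ℝ (Submodule.span ℝ (Set.range bv)) + finrank ℝ V = M := by
    have := Submodule.finrank_add_finrank_orthogonal (K := Submodule.span ℝ (Set.range bv))
    simpa [finrank_euclideanSpace_fin] using this
  set m := finrank ℝ V with hm
  have hdim : (M : ℝ) - K ≤ (m : ℝ) := by
    have h1 : (M : ℕ) ≤ K + m := by omega
    have := (Nat.cast_le (α := ℝ)).2 h1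
    push_cast at this
    linarith
  set ob := stdOrthonormalBasis ℝ V with hob
  set vv : Fin m → EuclideanSpace ℝ (Fin M) := fun j => (ob j : EuclideanSpace ℝ (Fin M)) with hvv
  have hon : Orthonormal ℝ vv := by
    rw [orthonormal_iff_ite]
    intro i j
    have := (orthonormal_iff_ite.1 ob.orthonormal) i j
    simpa [vv, Submodule.coe_inner] using this
  have hinner : ∀ (x : EuclideanSpace ℝ (Fin M)) (r : Fin M),
      (inner ℝ (rowv r) x : ℝ) = ∑ s, A r s * x s := by
    intro x r
    simp [rowv, PiLp.inner_apply, RCLike.inner_apply, mul_comm]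
  have hker : ∀ j i, (inner ℝ (bv i) (vv j) : ℝ) = 0 := by
    intro j i
    have hx : ((ob j : EuclideanSpace ℝ (Fin M))) ∈ V := (ob j).2
    exact hx (bv i) (Submodule.subset_span ⟨i, rfl⟩)
  have hrowv : ∀ (r : Fin M) (j : Fin m), (inner ℝ (rowv r) (vv j) : ℝ) = τ * vv j r := by
    intro r j
    rw [hinner]
    have hb : ∀ i : Fin K, ∑ s, b i s * vv j s = 0 := by
      intro i
      have := hker j i
      simpa [PiLp.inner_apply, RCLike.inner_apply, bv, mul_comm] using this
    calc ∑ s, A r s * vv j s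
        = ∑ s, ((if r = s then τ else 0) * vv j s + ∑ i, a i r * (b i s * vv j s)) := by
          apply Finset.sum_congr rfl; intro s _
          simp [hrs, hA, add_mul, Finset.sum_mul, mul_assoc, ite_mul]
      _ = τ * vv j r + ∑ i, a i r * ∑ s, b i s * vv j s := by
          rw [Finset.sum_add_distrib, Finset.sum_comm]
          simp [Finset.mul_sum, Finset.sum_ite_eq, mul_comm]
      _ = τ * vv j r := by simp [hb]
  have hbessel : ∀ r : Fin M, ∑ j, (τ * vv j r) ^ 2 ≤ ∑ s, A r s ^ 2 := by
    intro r
    have h1 := hon.sum_inner_products_le (s := Finset.univ) (rowv r)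
    have h2 : ‖rowv r‖ ^ 2 = ∑ s, A r s ^ 2 := by
      rw [← real_inner_self_eq_norm_sq, hinner]
      simp only [hrs]
      simp [sq]
    calc ∑ j, (τ * vv j r) ^ 2 = ∑ j, ‖(inner ℝ (vv j) (rowv r) : ℝ)‖ ^ 2 := by
          apply Finset.sum_congr rfl; intro j _
          rw [real_inner_comm, hrowv]
          simp [mul_pow, sq_abs]
      _ ≤ ‖rowv r‖ ^ 2 := h1
      _ = ∑ s, A r s ^ 2 := h2
  have hnorm : ∀ j : Fin m, ∑ r, vv j r ^ 2 = 1 := by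
    intro j
    have h1 : ‖vv j‖ = 1 := hon.1 j
    have h2 : ‖vv j‖ ^ 2 = ∑ r, vv j r ^ 2 := by
      rw [← real_inner_self_eq_norm_sq, PiLp.inner_apply]
      simp [RCLike.inner_apply, sq]
    rw [h1] at h2; simpa using h2.symm
  calc τ ^ 2 * ((M : ℝ) - K) ≤ τ ^ 2 * m := by nlinarith [sq_nonneg τ]
    _ = ∑ r : Fin M, ∑ j, (τ * vv j r) ^ 2 := by
        rw [Finset.sum_comm]
        simp only [mul_pow, ← Finset.mul_sum]
        simp [hnorm, Finset.mul_sum]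
    _ ≤ ∑ r : Fin M, ∑ s, A r s ^ 2 := Finset.sum_le_sum fun r _ => hbessel r

set_option maxHeartbeats 2000000 in

/-- Lower bound for low-rank approximation of `f = f⁰ + τ g`, where the integral operator of
`f⁰` has rank at most `r₀` (expressed as a separable representation with `r₀` terms),
`g(x,y) = Σ_{r<M} ψ_r(x)ψ_r(y)` for an orthonormal family of cardinality `M`, and the
approximant `h` has rank at most `d`.  Then `‖f − h‖² ≥ τ² max(M − r₀ − d, 0)`. -/
theorem low_rank_approximation_lower_bound
    (μ : Measure ℝ) (hμ : μ = volume.restrict (Set.Ioo (0:ℝ) 1))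
    {M r₀ d : ℕ} (τ : ℝ) (hτ : 0 < τ)
    (ψ : Fin M → ℝ → ℝ)
    (hψmeas : ∀ r, Measurable (ψ r))
    (hψL2 : ∀ r, MemLp (ψ r) 2 μ)
    (hortho : ∀ r s : Fin M, (∫ x, ψ r x * ψ s x ∂μ) = if r = s then 1 else 0)
    (f f0 g h : ℝ × ℝ → ℝ)
    (hg : ∀ p : ℝ × ℝ, g p = ∑ r, ψ r p.1 * ψ r p.2)
    (hf : ∀ p : ℝ × ℝ, f p = f0 p + τ * g p)
    -- the integral operator of `f0` has rank at most `r₀`: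
    (hf0rank : ∃ u w : Fin r₀ → ℝ → ℝ, (∀ i, MemLp (u i) 2 μ) ∧ (∀ i, MemLp (w i) 2 μ) ∧
        f0 =ᵐ[μ.prod μ] fun p => ∑ i, u i p.1 * w i p.2)
    -- the integral operator of `h` has rank at most `d`:
    (hhrank : ∃ u w : Fin d → ℝ → ℝ, (∀ i, MemLp (u i) 2 μ) ∧ (∀ i, MemLp (w i) 2 μ) ∧
        h =ᵐ[μ.prod μ] fun p => ∑ i, u i p.1 * w i p.2)
    (hfh : MemLp (fun p => f p - h p) 2 (μ.prod μ)) :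
    τ ^ 2 * max ((M : ℝ) - r₀ - d) 0 ≤ ∫ p, (f p - h p) ^ 2 ∂(μ.prod μ) := by
  classical
  have hnonneg : 0 ≤ ∫ p, (f p - h p) ^ 2 ∂(μ.prod μ) :=
    integral_nonneg fun p => sq_nonneg _
  rcases le_or_gt ((M : ℝ) - r₀ - d) 0 with hle | hlt
  · rw [max_eq_right hle, mul_zero]; exact hnonneg
  rw [max_eq_left hlt.le]
  -- measure instances
  haveI hfin : IsFiniteMeasure μ := by
    refine ⟨?_⟩
    rw [hμ, Measure.restrict_apply_univ, Real.volume_Ioo]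
    exact ENNReal.ofReal_lt_top
  obtain ⟨u1, w1, hu1, hw1, hf0⟩ := hf0rank
  obtain ⟨u2, w2, hu2, hw2, hh2⟩ := hhrank
  set K := r₀ + d with hK
  set U : Fin K → ℝ → ℝ := Fin.append u1 u2 with hU
  set W : Fin K → ℝ → ℝ := Fin.append w1 (fun j => fun y => -(w2 j y)) with hW
  have hUL2 : ∀ i, MemLp (U i) 2 μ := by
    intro i
    refine Fin.addCases (fun j => ?_) (fun j => ?_) i
    · simpa [hU, Fin.append_left] using hu1 j
    · simpa [hU, Fin.append_right] using hu2 j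
  have hWL2 : ∀ i, MemLp (W i) 2 μ := by
    intro i
    refine Fin.addCases (fun j => ?_) (fun j => ?_) i
    · simpa [hW, Fin.append_left] using hw1 j
    · simp only [hW, Fin.append_right]; exact (hw2 j).neg
  -- a.e. representation of f - h
  have hrepr : (fun p => f p - h p) =ᵐ[μ.prod μ]
      fun p => τ * (∑ t, ψ t p.1 * ψ t p.2) + ∑ i, U i p.1 * W i p.2 := by
    filter_upwards [hf0, hh2] with p h0 hhp
    have hUW : ∑ i, U i p.1 * W i p.2
        = (∑ i, u1 i p.1 * w1 i p.2) - ∑ j, u2 j p.1 * w2 j p.2 := by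
      rw [hU, hW, Fin.sum_univ_add]
      simp only [Fin.append_left, Fin.append_right, mul_neg, Finset.sum_neg_distrib]
      ring
    rw [hf p, hg p, h0, hhp, hUW]
    ring
  -- coefficients
  set a : Fin K → Fin M → ℝ := fun i r => ∫ x, U i x * ψ r x ∂μ with ha
  set b : Fin K → Fin M → ℝ := fun i s => ∫ y, W i y * ψ s y ∂μ with hb
  set c : Fin M → Fin M → ℝ :=
    fun r s => ∫ p, (f p - h p) * (ψ r p.1 * ψ s p.2) ∂(μ.prod μ) with hc
  have hcval : ∀ r s, c r s = (if r = s then τ else 0) + ∑ i, a i r * b i s := by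
    intro r s
    have hstep : (fun p : ℝ × ℝ => (f p - h p) * (ψ r p.1 * ψ s p.2)) =ᵐ[μ.prod μ]
        fun p => (∑ t, τ * ((ψ t p.1 * ψ r p.1) * (ψ t p.2 * ψ s p.2)))
               + ∑ i, ((U i p.1 * ψ r p.1) * (W i p.2 * ψ s p.2)) := by
      filter_upwards [hrepr] with p hp
      have e1 : (∑ t, ψ t p.1 * ψ t p.2) * (ψ r p.1 * ψ s p.2)
          = ∑ t, (ψ t p.1 * ψ r p.1) * (ψ t p.2 * ψ s p.2) := by
        rw [Finset.sum_mul]; exact Finset.sum_congr rfl fun t _ => by ring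
      have e2 : (∑ i, U i p.1 * W i p.2) * (ψ r p.1 * ψ s p.2)
          = ∑ i, (U i p.1 * ψ r p.1) * (W i p.2 * ψ s p.2) := by
        rw [Finset.sum_mul]; exact Finset.sum_congr rfl fun i _ => by ring
      rw [hp, add_mul, mul_assoc, e1, e2, Finset.mul_sum]
    have hT : ∀ t : Fin M, Integrable
        (fun p : ℝ × ℝ => (ψ t p.1 * ψ r p.1) * (ψ t p.2 * ψ s p.2)) (μ.prod μ) :=
      fun t => (l2mul_integrable (hψL2 t) (hψL2 r)).mul_prod
        (l2mul_integrable (hψL2 t) (hψL2 s))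
    have hS : ∀ i : Fin K, Integrable
        (fun p : ℝ × ℝ => (U i p.1 * ψ r p.1) * (W i p.2 * ψ s p.2)) (μ.prod μ) :=
      fun i => (l2mul_integrable (hUL2 i) (hψL2 r)).mul_prod
        (l2mul_integrable (hWL2 i) (hψL2 s))
    simp only [hc]
    rw [integral_congr_ae hstep]
    rw [integral_add (integrable_finset_sum _ fun t _ => (hT t).const_mul τ)
      (integrable_finset_sum _ fun i _ => hS i)]
    rw [integral_finset_sum _ fun t _ => (hT t).const_mul τ,
      integral_finset_sum _ fun i _ => hS i]
    congr 1
    · have : ∀ t : Fin M,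
          ∫ p, τ * ((ψ t p.1 * ψ r p.1) * (ψ t p.2 * ψ s p.2)) ∂(μ.prod μ)
          = τ * ((if t = r then 1 else 0) * (if t = s then 1 else 0)) := by
        intro t
        have h0 : (∫ p, (ψ t p.1 * ψ r p.1) * (ψ t p.2 * ψ s p.2) ∂(μ.prod μ))
            = (∫ x, ψ t x * ψ r x ∂μ) * ∫ y, ψ t y * ψ s y ∂μ :=
          integral_prod_mul (fun x => ψ t x * ψ r x) (fun y => ψ t y * ψ s y)
        rw [integral_const_mul, h0, hortho t r, hortho t s]
      rw [Finset.sum_congr rfl fun t _ => this t]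
      by_cases hrs : r = s
      · subst hrs
        rw [Finset.sum_eq_single r]
        · simp
        · intro t _ ht; simp [ht]
        · simp
      · rw [Finset.sum_eq_zero]
        · simp [hrs]
        · intro t _
          by_cases h1 : t = r <;> by_cases h2 : t = s <;> simp_all
    · refine Finset.sum_congr rfl fun i _ => ?_
      exact integral_prod_mul (fun x => U i x * ψ r x) (fun y => W i y * ψ s y)
  -- Bessel's inequality
  have hΨmem : ∀ rs : Fin M × Fin M,
      MemLp (fun p : ℝ × ℝ => ψ rs.1 p.1 * ψ rs.2 p.2) 2 (μ.prod μ) :=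
    fun rs => l2prod_memℒp (hψmeas rs.1) (hψmeas rs.2) (hψL2 rs.1) (hψL2 rs.2)
  set Ψ : Fin M × Fin M → Lp ℝ 2 (μ.prod μ) := fun rs => (hΨmem rs).toLp _ with hΨ
  set FL : Lp ℝ 2 (μ.prod μ) := hfh.toLp _ with hFL
  have hinnerLp : ∀ (φ χ : ℝ × ℝ → ℝ) (hφ : MemLp φ 2 (μ.prod μ))
      (hχ : MemLp χ 2 (μ.prod μ)),
      (inner ℝ (hφ.toLp φ) (hχ.toLp χ) : ℝ) = ∫ p, φ p * χ p ∂(μ.prod μ) := by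
    intro φ χ hφ hχ
    rw [L2.inner_def]
    apply integral_congr_ae
    filter_upwards [hφ.coeFn_toLp, hχ.coeFn_toLp] with p h1 h2
    simp [h1, h2, RCLike.inner_apply, mul_comm]
  have hon : Orthonormal ℝ Ψ := by
    rw [orthonormal_iff_ite]
    rintro ⟨r, s⟩ ⟨r', s'⟩
    rw [hΨ]
    rw [hinnerLp _ _ (hΨmem (r, s)) (hΨmem (r', s'))]
    have h0 : (∫ p, (ψ r p.1 * ψ s p.2) * (ψ r' p.1 * ψ s' p.2) ∂(μ.prod μ))
        = (∫ x, ψ r x * ψ r' x ∂μ) * ∫ y, ψ s y * ψ s' y ∂μ := by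
      rw [show (fun p : ℝ × ℝ => (ψ r p.1 * ψ s p.2) * (ψ r' p.1 * ψ s' p.2))
          = fun p : ℝ × ℝ => (ψ r p.1 * ψ r' p.1) * (ψ s p.2 * ψ s' p.2)
        from funext fun p => by ring]
      exact integral_prod_mul (fun x => ψ r x * ψ r' x) (fun y => ψ s y * ψ s' y)
    rw [h0, hortho r r', hortho s s']
    by_cases h1 : r = r' <;> by_cases h2 : s = s' <;> simp [h1, h2, Prod.ext_iff]
  have hbessel := hon.sum_inner_products_le (s := Finset.univ) FL
  have hcinner : ∀ rs : Fin M × Fin M, (inner ℝ (Ψ rs) FL : ℝ) = c rs.1 rs.2 := by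
    rintro ⟨r, s⟩
    rw [hΨ, hFL, hinnerLp _ _ (hΨmem (r, s)) hfh, hc]
    exact integral_congr_ae (Filter.Eventually.of_forall fun p => by ring)
  have hFLnorm : ‖FL‖ ^ 2 = ∫ p, (f p - h p) ^ 2 ∂(μ.prod μ) := by
    rw [← real_inner_self_eq_norm_sq, hFL, hinnerLp _ _ hfh hfh]
    exact integral_congr_ae (Filter.Eventually.of_forall fun p => by ring)
  have hsumc : ∑ r : Fin M, ∑ s : Fin M, c r s ^ 2 ≤ ∫ p, (f p - h p) ^ 2 ∂(μ.prod μ) := by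
    rw [← hFLnorm]
    calc ∑ r : Fin M, ∑ s : Fin M, c r s ^ 2
        = ∑ rs : Fin M × Fin M, ‖(inner ℝ (Ψ rs) FL : ℝ)‖ ^ 2 := by
          rw [Fintype.sum_prod_type]
          exact Finset.sum_congr rfl fun r _ => Finset.sum_congr rfl fun s _ => by
            rw [hcinner (r, s)]; simp [sq_abs]
      _ ≤ ‖FL‖ ^ 2 := hbessel
  -- conclude
  have hMK : (M : ℝ) - r₀ - d = (M : ℝ) - K := by rw [hK]; push_cast; ring
  calc τ ^ 2 * ((M : ℝ) - r₀ - d) = τ ^ 2 * ((M : ℝ) - K) := by rw [hMK]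
    _ ≤ ∑ r : Fin M, ∑ s : Fin M, ((if r = s then τ else 0) + ∑ i, a i r * b i s) ^ 2 :=
        matrix_lower_bound τ a b
    _ = ∑ r : Fin M, ∑ s : Fin M, c r s ^ 2 := by
        exact Finset.sum_congr rfl fun r _ => Finset.sum_congr rfl fun s _ => by
          rw [hcval r s]
    _ ≤ ∫ p, (f p - h p) ^ 2 ∂(μ.prod μ) := hsumc
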